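/- arXiv:2212.07760 — 3 statements merged into one kernel-verified Lean document; each statement's English description precedes it below -/
import Mathlib

section
/- Let n ≥ 3, s ∈ (0,1), U the Aubin-Talenti function with ‖U‖_{HL} = 1, and for t > 0, x₀ ∈ ℝ^n set V_{t,x₀}(x) = t^{(2-n)/2} U((x-x₀)/t). Then ‖V_{t,x₀}‖_{HL} = 1 and G(V_{t,x₀})² = ‖∇U‖_{L²}² + t^{2-2s}[U]_s². Consequently G(V_{t,x₀})² → S_{H,L,C} as t → 0⁺. -/
open MeasureTheory Filter

/-- Dirichlet energy `‖∇u‖_{L²(ℝⁿ)}²`. -/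
noncomputable def grad2 {n : ℕ} (u : EuclideanSpace ℝ (Fin n) → ℝ) : ℝ :=
  ∫ x, ‖fderiv ℝ u x‖ ^ 2

/-- Gagliardo seminorm squared `[u]_s² = (C(n,s)/2)∫∫ |u(x)-u(y)|²/|x-y|^{n+2s}`. -/
noncomputable def gagliardo2 {n : ℕ} (s Cns : ℝ) (u : EuclideanSpace ℝ (Fin n) → ℝ) : ℝ :=
  Cns / 2 * ∫ x, ∫ y, |u x - u y| ^ 2 / ‖x - y‖ ^ ((n : ℝ) + 2 * s)

/-- Hardy-Littlewood (Choquard) norm squared. -/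
noncomputable def hlNorm2 {n : ℕ} (μ : ℝ) (u : EuclideanSpace ℝ (Fin n) → ℝ) : ℝ :=
  (∫ x, ∫ y, |u x| ^ ((2 * (n : ℝ) - μ) / ((n : ℝ) - 2)) *
      |u y| ^ ((2 * (n : ℝ) - μ) / ((n : ℝ) - 2)) / ‖x - y‖ ^ μ)
    ^ (((n : ℝ) - 2) / (2 * (n : ℝ) - μ))

/-- The rescaled bubble `V_{t,x₀}(x) = t^{(2-n)/2} U((x-x₀)/t)`. -/
noncomputable def bubbleV {n : ℕ} (U : EuclideanSpace ℝ (Fin n) → ℝ) (t : ℝ)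
    (x₀ : EuclideanSpace ℝ (Fin n)) : EuclideanSpace ℝ (Fin n) → ℝ :=
  fun x => t ^ ((2 - (n : ℝ)) / 2) * U (t⁻¹ • (x - x₀))

/-!
The substitution `x = t • a + x₀` (in each variable of a double integral) turns every quantity
attached to `V_{t,x₀}` into the same quantity for `U` times a power of `t`. The exponents of the
Dirichlet energy and of the Hardy-Littlewood norm are critical for `ℝⁿ`, so the power is `t ^ 0`;
the Gagliardo seminorm picks up `t ^ (2 - 2s)`, which tends to `0` as `t → 0⁺` because `s < 1`.
No regularity of `U` is needed: `fderiv` commutes with scalars and affine changes of variables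
even where `U` is not differentiable.
-/

section Scaling

variable {n : ℕ} {t : ℝ}

lemma integral_eq_pow_mul_integral_comp_smul_add (ht : 0 < t) (x₀ : EuclideanSpace ℝ (Fin n))
    (f : EuclideanSpace ℝ (Fin n) → ℝ) :
    ∫ x, f x = t ^ n * ∫ a, f (t • a + x₀) := by
  rw [Measure.integral_comp_smul_of_nonneg volume (fun y => f (y + x₀)) t (hR := ht.le),
    integral_add_right_eq_self f x₀, finrank_euclideanSpace_fin, smul_eq_mul,
    mul_inv_cancel_left₀ (pow_ne_zero n ht.ne')]

lemma integral_integral_eq_rpow_mul_of_comp_smul_add (ht : 0 < t)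
    (x₀ : EuclideanSpace ℝ (Fin n)) {K L : EuclideanSpace ℝ (Fin n) → EuclideanSpace ℝ (Fin n) → ℝ}
    {e : ℝ} (hKL : ∀ a b, K (t • a + x₀) (t • b + x₀) = t ^ e * L a b) :
    ∫ x, ∫ y, K x y = t ^ (2 * n + e) * ∫ x, ∫ y, L x y := by
  have hinner : ∀ a, ∫ y, K (t • a + x₀) y = t ^ n * (t ^ e * ∫ b, L a b) := fun a => by
    rw [integral_eq_pow_mul_integral_comp_smul_add ht x₀]
    simp only [hKL, integral_const_mul]
  rw [integral_eq_pow_mul_integral_comp_smul_add ht x₀]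
  simp only [hinner, integral_const_mul]
  rw [Real.rpow_add ht, two_mul, Real.rpow_add ht, Real.rpow_natCast]
  ring

lemma bubbleV_smul_add (U : EuclideanSpace ℝ (Fin n) → ℝ) (ht : 0 < t)
    (x₀ a : EuclideanSpace ℝ (Fin n)) :
    bubbleV U t x₀ (t • a + x₀) = t ^ ((2 - (n : ℝ)) / 2) * U a := by
  simp only [bubbleV, add_sub_cancel_right, smul_smul, inv_mul_cancel₀ ht.ne', one_smul]

lemma norm_smul_add_sub_smul_add (ht : 0 < t) (x₀ a b : EuclideanSpace ℝ (Fin n)) :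
    ‖(t • a + x₀) - (t • b + x₀)‖ = t * ‖a - b‖ := by
  rw [add_sub_add_right_eq_sub, ← smul_sub, norm_smul, Real.norm_of_nonneg ht.le]

lemma fderiv_bubbleV (U : EuclideanSpace ℝ (Fin n) → ℝ) (x₀ x : EuclideanSpace ℝ (Fin n)) :
    fderiv ℝ (bubbleV U t x₀) x =
      (t ^ ((2 - (n : ℝ)) / 2) * t⁻¹) • fderiv ℝ U (t⁻¹ • (x - x₀)) := by
  have hV : bubbleV U t x₀ = t ^ ((2 - (n : ℝ)) / 2) • fun x => (fun y => U (t⁻¹ • y)) (x - x₀) :=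
    rfl
  rw [hV, fderiv_const_smul_field, Pi.smul_apply, fderiv_comp_sub (f := fun y => U (t⁻¹ • y)),
    fderiv_comp_smul, smul_smul]

lemma grad2_bubbleV (U : EuclideanSpace ℝ (Fin n) → ℝ) (ht : 0 < t)
    (x₀ : EuclideanSpace ℝ (Fin n)) :
    grad2 (bubbleV U t x₀) = grad2 U := by
  have hpos : 0 < t ^ ((2 - (n : ℝ)) / 2) * t⁻¹ := by positivity
  have hnorm : ∀ x, ‖fderiv ℝ (bubbleV U t x₀) x‖ ^ 2 =
      (t ^ ((2 - (n : ℝ)) / 2) * t⁻¹) ^ 2 * ‖fderiv ℝ U (t⁻¹ • (x - x₀))‖ ^ 2 := fun x => by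
    rw [fderiv_bubbleV, norm_smul, Real.norm_of_nonneg hpos.le, mul_pow]
  have hcancel : (t ^ ((2 - (n : ℝ)) / 2) * t⁻¹) ^ 2 * t ^ n = 1 := by
    rw [← Real.rpow_natCast, ← Real.rpow_neg_one, ← Real.rpow_add ht, ← Real.rpow_natCast,
      ← Real.rpow_mul ht.le, ← Real.rpow_add ht,
      show ((2 - (n : ℝ)) / 2 + -1) * (2 : ℕ) + n = 0 by push_cast; ring, Real.rpow_zero]
  unfold grad2
  simp only [hnorm, integral_const_mul]
  rw [integral_eq_pow_mul_integral_comp_smul_add ht x₀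
    (fun x => ‖fderiv ℝ U (t⁻¹ • (x - x₀))‖ ^ 2)]
  simp only [add_sub_cancel_right, smul_smul, inv_mul_cancel₀ ht.ne', one_smul]
  rw [← mul_assoc, hcancel, one_mul]

lemma hlNorm2_bubbleV (hn : n ≠ 2) (μ : ℝ) (U : EuclideanSpace ℝ (Fin n) → ℝ) (ht : 0 < t)
    (x₀ : EuclideanSpace ℝ (Fin n)) :
    hlNorm2 μ (bubbleV U t x₀) = hlNorm2 μ U := by
  set α : ℝ := (2 - (n : ℝ)) / 2
  set p : ℝ := (2 * (n : ℝ) - μ) / ((n : ℝ) - 2)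
  have hkernel : ∀ a b, |bubbleV U t x₀ (t • a + x₀)| ^ p * |bubbleV U t x₀ (t • b + x₀)| ^ p /
      ‖(t • a + x₀) - (t • b + x₀)‖ ^ μ =
        t ^ (α * p + α * p - μ) * (|U a| ^ p * |U b| ^ p / ‖a - b‖ ^ μ) := fun a b => by
    have htα : 0 < t ^ α := by positivity
    rw [bubbleV_smul_add U ht, bubbleV_smul_add U ht, norm_smul_add_sub_smul_add ht,
      abs_mul, abs_mul, abs_of_pos htα, Real.mul_rpow htα.le (abs_nonneg _),
      Real.mul_rpow htα.le (abs_nonneg _), Real.mul_rpow ht.le (norm_nonneg _),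
      ← Real.rpow_mul ht.le, mul_mul_mul_comm, mul_div_mul_comm, Real.rpow_sub ht,
      Real.rpow_add ht]
  have hexp : 2 * (n : ℝ) + (α * p + α * p - μ) = 0 := by
    have hn2 : (n : ℝ) - 2 ≠ 0 := sub_ne_zero.2 (by exact_mod_cast hn)
    simp only [α, p]
    field_simp
    ring
  unfold hlNorm2
  rw [integral_integral_eq_rpow_mul_of_comp_smul_add ht x₀ hkernel, hexp, Real.rpow_zero, one_mul]

lemma gagliardo2_bubbleV (s Cns : ℝ) (U : EuclideanSpace ℝ (Fin n) → ℝ) (ht : 0 < t)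
    (x₀ : EuclideanSpace ℝ (Fin n)) :
    gagliardo2 s Cns (bubbleV U t x₀) = t ^ (2 - 2 * s) * gagliardo2 s Cns U := by
  set α : ℝ := (2 - (n : ℝ)) / 2
  have hkernel : ∀ a b, |bubbleV U t x₀ (t • a + x₀) - bubbleV U t x₀ (t • b + x₀)| ^ 2 /
      ‖(t • a + x₀) - (t • b + x₀)‖ ^ ((n : ℝ) + 2 * s) =
        t ^ (α * 2 - ((n : ℝ) + 2 * s)) * (|U a - U b| ^ 2 / ‖a - b‖ ^ ((n : ℝ) + 2 * s)) :=
      fun a b => by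
    have htα : 0 < t ^ α := by positivity
    rw [bubbleV_smul_add U ht, bubbleV_smul_add U ht, norm_smul_add_sub_smul_add ht, ← mul_sub,
      abs_mul, abs_of_pos htα, mul_pow, Real.mul_rpow ht.le (norm_nonneg _), mul_div_mul_comm,
      ← Real.rpow_natCast (t ^ α), ← Real.rpow_mul ht.le, Real.rpow_sub ht, Nat.cast_ofNat]
  unfold gagliardo2
  rw [integral_integral_eq_rpow_mul_of_comp_smul_add ht x₀ hkernel,
    show 2 * (n : ℝ) + (α * 2 - ((n : ℝ) + 2 * s)) = 2 - 2 * s by ring]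
  ring

lemma grad2_add_gagliardo2_bubbleV (s Cns : ℝ) (U : EuclideanSpace ℝ (Fin n) → ℝ) (ht : 0 < t)
    (x₀ : EuclideanSpace ℝ (Fin n)) :
    grad2 (bubbleV U t x₀) + gagliardo2 s Cns (bubbleV U t x₀) =
      grad2 U + t ^ (2 - 2 * s) * gagliardo2 s Cns U := by
  rw [grad2_bubbleV U ht, gagliardo2_bubbleV s Cns U ht]

end Scaling

lemma tendsto_const_add_rpow_mul_nhdsGT_zero {a : ℝ} (ha : 0 < a) (A B : ℝ) :
    Tendsto (fun t : ℝ => A + t ^ a * B) (nhdsWithin 0 (Set.Ioi 0)) (nhds A) := by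
  have hpow : Tendsto (fun t : ℝ => t ^ a) (nhdsWithin 0 (Set.Ioi 0)) (nhds 0) := by
    simpa [Real.zero_rpow ha.ne'] using
      (Real.continuousAt_rpow_const 0 a (Or.inr ha.le)).tendsto.mono_left nhdsWithin_le_nhds
  simpa using tendsto_const_nhds.add (hpow.mul_const B)

theorem stmt_8_general (n : ℕ) (hn : 3 ≤ n) (s μ Cns S : ℝ) (hs1 : s < 1)
    (U : EuclideanSpace ℝ (Fin n) → ℝ)
    (hUHL : hlNorm2 μ U = 1)
    (hUopt : grad2 U = S) :
    (∀ t : ℝ, 0 < t → ∀ x₀ : EuclideanSpace ℝ (Fin n),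
      hlNorm2 μ (bubbleV U t x₀) = 1 ∧
      grad2 (bubbleV U t x₀) + gagliardo2 s Cns (bubbleV U t x₀) =
        grad2 U + t ^ (2 - 2 * s) * gagliardo2 s Cns U) ∧
    ∀ x₀ : EuclideanSpace ℝ (Fin n),
      Tendsto (fun t : ℝ => grad2 (bubbleV U t x₀) + gagliardo2 s Cns (bubbleV U t x₀))
        (nhdsWithin 0 (Set.Ioi 0)) (nhds S) := by
  refine ⟨fun t ht x₀ => ⟨(hlNorm2_bubbleV (by omega) μ U ht x₀).trans hUHL,
    grad2_add_gagliardo2_bubbleV s Cns U ht x₀⟩, fun x₀ => ?_⟩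
  rw [← hUopt]
  exact (tendsto_const_add_rpow_mul_nhdsGT_zero (by linarith) _ _).congr'
    (eventually_mem_nhdsWithin.mono fun t ht => (grad2_add_gagliardo2_bubbleV s Cns U ht x₀).symm)

/-- `‖V_{t,x₀}‖_{HL} = 1`, `G(V_{t,x₀})² = ‖∇U‖² + t^{2-2s}[U]_s²`, and consequently
`G(V_{t,x₀})² → S_{H,L,C}` as `t → 0⁺`, where `U` is the normalized Aubin-Talenti
bubble with `‖∇U‖² = S_{H,L,C}`. -/
theorem stmt_8 (n : ℕ) (hn : 3 ≤ n) (s μ Cns c S : ℝ) (hs0 : 0 < s) (hs1 : s < 1)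
    (hμ0 : 0 < μ) (hμn : μ < n) (hCns : 0 < Cns) (hc : 0 < c)
    (U : EuclideanSpace ℝ (Fin n) → ℝ)
    (hUdef : ∀ y, U y = c * (1 + ‖y‖ ^ 2) ^ ((2 - (n : ℝ)) / 2))
    (hUHL : hlNorm2 μ U = 1)
    (hUopt : grad2 U = S) :
    (∀ t : ℝ, 0 < t → ∀ x₀ : EuclideanSpace ℝ (Fin n),
      hlNorm2 μ (bubbleV U t x₀) = 1 ∧
      grad2 (bubbleV U t x₀) + gagliardo2 s Cns (bubbleV U t x₀) =
        grad2 U + t ^ (2 - 2 * s) * gagliardo2 s Cns U) ∧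
    ∀ x₀ : EuclideanSpace ℝ (Fin n),
      Tendsto (fun t : ℝ => grad2 (bubbleV U t x₀) + gagliardo2 s Cns (bubbleV U t x₀))
        (nhdsWithin 0 (Set.Ioi 0)) (nhds S) :=
  stmt_8_general n hn s μ Cns S hs1 U hUHL hUopt
end

section
/- Let Ω ⊂ ℝ^n be a bounded C^{1,1} domain and u ∈ C²(Ω̄) with u = 0 on ∂Ω. Then −∫_Ω Δu (∇u·x) dx = ((2−n)/2) ∫_Ω |∇u|² dx − (1/2) ∫_{∂Ω} (∂u/∂ν)² (ν(x)·x) dσ. -/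
/-!
Apply the divergence theorem to the fields `⟪∇u, x⟫ ∇u` and `‖∇u‖² x`. By the symmetry of the
Hessian their divergences are `Δu ⟪∇u, x⟫ + ‖∇u‖² + ⟪D²u x, ∇u⟫` and `n ‖∇u‖² + 2 ⟪D²u x, ∇u⟫`,
while on the boundary, where `∇u` is normal, both fluxes equal `∫ (∂u/∂ν)² ⟪ν, x⟫ dσ`.
Eliminating `∫ ⟪D²u x, ∇u⟫` between the two identities gives the claim.
-/

open MeasureTheory InnerProductSpace Module
open scoped RealInnerProductSpace

section VectorCalculus

variable {E : Type*} [NormedAddCommGroup E] [InnerProductSpace ℝ E]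

noncomputable def divergence (F : E → E) (x : E) : ℝ :=
  LinearMap.trace ℝ E (fderiv ℝ F x : E →ₗ[ℝ] E)

section Gradient

variable [CompleteSpace E] {u : E → ℝ}

lemma ContDiff.gradient {n : WithTop ℕ∞} (hu : ContDiff ℝ (n + 1) u) :
    ContDiff ℝ n (gradient u) :=
  (toDual ℝ E).symm.contDiff.comp (hu.fderiv_right le_rfl)

lemma inner_fderiv_gradient (x v w : E) :
    ⟪fderiv ℝ (gradient u) x v, w⟫ = fderiv ℝ (fderiv ℝ u) x v w := by
  rw [show gradient u = (toDual ℝ E).symm ∘ fderiv ℝ u from rfl, LinearIsometryEquiv.comp_fderiv]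
  exact toDual_symm_apply

lemma inner_fderiv_gradient_comm {x : E} (hu : ContDiffAt ℝ 2 u x) (v w : E) :
    ⟪fderiv ℝ (gradient u) x v, w⟫ = ⟪fderiv ℝ (gradient u) x w, v⟫ := by
  rw [inner_fderiv_gradient, inner_fderiv_gradient]
  exact hu.isSymmSndFDerivAt (by simp) v w

end Gradient

variable [FiniteDimensional ℝ E]

lemma divergence_smul {g : E → ℝ} {G : E → E} {x : E}
    (hg : DifferentiableAt ℝ g x) (hG : DifferentiableAt ℝ G x) :
    divergence (fun y => g y • G y) x = g x * divergence G x + fderiv ℝ g x (G x) := by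
  rw [divergence, (hg.hasFDerivAt.fun_smul hG.hasFDerivAt).fderiv]
  simp [divergence]

lemma ContDiff.continuous_divergence {F : E → E} (hF : ContDiff ℝ 1 F) :
    Continuous (divergence F) :=
  (LinearMap.continuous_of_finiteDimensional
    ((LinearMap.trace ℝ E).comp (ContinuousLinearMap.coeLM ℝ))).comp
      (hF.continuous_fderiv one_ne_zero)

lemma divergence_id (x : E) : divergence (fun y => y) x = finrank ℝ E := by
  simp [divergence]

variable {u : E → ℝ}

lemma divergence_inner_gradient_smul_gradient (hu : ContDiff ℝ 2 u) (x : E) :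
    divergence (fun y => ⟪gradient u y, y⟫ • gradient u y) x =
      divergence (gradient u) x * ⟪gradient u x, x⟫ + ‖gradient u x‖ ^ 2 +
        ⟪fderiv ℝ (gradient u) x x, gradient u x⟫ := by
  have hG : Differentiable ℝ (gradient u) := (hu.gradient (n := 1)).differentiable one_ne_zero
  rw [divergence_smul ((hG x).inner ℝ differentiableAt_fun_id) (hG x),
    fderiv_inner_apply ℝ (hG x) differentiableAt_fun_id, fderiv_fun_id,
    inner_fderiv_gradient_comm hu.contDiffAt (gradient u x) x, ContinuousLinearMap.id_apply,
    real_inner_self_eq_norm_sq]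
  ring

lemma divergence_normSq_gradient_smul_id (hu : ContDiff ℝ 2 u) (x : E) :
    divergence (fun y => ‖gradient u y‖ ^ 2 • y) x =
      finrank ℝ E * ‖gradient u x‖ ^ 2 + 2 * ⟪fderiv ℝ (gradient u) x x, gradient u x⟫ := by
  have hG : Differentiable ℝ (gradient u) := (hu.gradient (n := 1)).differentiable one_ne_zero
  rw [divergence_smul ((hG x).hasFDerivAt.norm_sq.differentiableAt) differentiableAt_fun_id,
    (hG x).hasFDerivAt.norm_sq.fderiv, divergence_id]
  simp only [_root_.smul_apply, ContinuousLinearMap.comp_apply, innerSL_apply_apply,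
    nsmul_eq_mul, real_inner_comm]
  ring

end VectorCalculus

section NormalVector

variable {E : Type*} [NormedAddCommGroup E] [InnerProductSpace ℝ E] {g ν : E}

lemma inner_eq_mul_inner_of_eq_inner_smul (hg : g = ⟪g, ν⟫ • ν) (x : E) :
    ⟪g, x⟫ = ⟪g, ν⟫ * ⟪ν, x⟫ := by
  conv_lhs => rw [hg]
  exact real_inner_smul_left ν x _

lemma norm_sq_eq_inner_sq_of_eq_inner_smul (hg : g = ⟪g, ν⟫ • ν) : ‖g‖ ^ 2 = ⟪g, ν⟫ ^ 2 := by
  rw [← real_inner_self_eq_norm_sq, inner_eq_mul_inner_of_eq_inner_smul hg, real_inner_comm, sq]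

end NormalVector

lemma Continuous.integrableOn_of_isBounded {X F : Type*} [MetricSpace X] [ProperSpace X]
    [MeasurableSpace X] [OpensMeasurableSpace X] [NormedAddCommGroup F] {f : X → F}
    (hf : Continuous f) {Ω : Set X} (hΩ : Bornology.IsBounded Ω) (μ : Measure X)
    [IsFiniteMeasureOnCompacts μ] : IntegrableOn f Ω μ :=
  (hf.continuousOn.integrableOn_compact hΩ.isCompact_closure).mono_set subset_closure

section Pohozaev

variable {E : Type*} [NormedAddCommGroup E] [InnerProductSpace ℝ E] [FiniteDimensional ℝ E]
  [MeasurableSpace E] [OpensMeasurableSpace E]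

theorem pohozaev_identity {Ω : Set E} (hΩ : Bornology.IsBounded Ω)
    (μ : Measure E) [IsFiniteMeasureOnCompacts μ] (σ : Measure E) (ν : E → E)
    (hσ : ∀ᵐ x ∂σ, x ∈ frontier Ω) {u : E → ℝ} (hu : ContDiff ℝ 2 u)
    (hpar : ∀ x ∈ frontier Ω, gradient u x = ⟪gradient u x, ν x⟫ • ν x)
    (hdiv : ∀ F : E → E, ContDiff ℝ 1 F →
      ∫ x in Ω, divergence F x ∂μ = ∫ x, ⟪F x, ν x⟫ ∂σ) :
    -∫ x in Ω, divergence (gradient u) x * ⟪gradient u x, x⟫ ∂μ =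
      (2 - finrank ℝ E) / 2 * ∫ x in Ω, ‖gradient u x‖ ^ 2 ∂μ -
        1 / 2 * ∫ x, ⟪gradient u x, ν x⟫ ^ 2 * ⟪ν x, x⟫ ∂σ := by
  have hG : ContDiff ℝ 1 (gradient u) := hu.gradient
  have hGc : Continuous (gradient u) := hG.continuous
  have hA : IntegrableOn (fun x => divergence (gradient u) x * ⟪gradient u x, x⟫) Ω μ :=
    (hG.continuous_divergence.mul (hGc.inner continuous_id)).integrableOn_of_isBounded hΩ μ
  have hB : IntegrableOn (fun x => ‖gradient u x‖ ^ 2) Ω μ :=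
    (hGc.norm.pow 2).integrableOn_of_isBounded hΩ μ
  have hC : IntegrableOn (fun x => ⟪fderiv ℝ (gradient u) x x, gradient u x⟫) Ω μ :=
    (((hG.continuous_fderiv one_ne_zero).clm_apply continuous_id).inner hGc)
      |>.integrableOn_of_isBounded hΩ μ
  have flux₁ := hdiv (fun y => ⟪gradient u y, y⟫ • gradient u y)
    ((hG.inner ℝ contDiff_id).smul hG)
  have flux₂ := hdiv (fun y => ‖gradient u y‖ ^ 2 • y) ((hG.norm_sq ℝ).smul contDiff_id)
  have bd₁ : ∀ᵐ x ∂σ, ⟪⟪gradient u x, x⟫ • gradient u x, ν x⟫ =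
      ⟪gradient u x, ν x⟫ ^ 2 * ⟪ν x, x⟫ := hσ.mono fun x hx => by
    rw [real_inner_smul_left, inner_eq_mul_inner_of_eq_inner_smul (hpar x hx)]
    ring
  have bd₂ : ∀ᵐ x ∂σ, ⟪‖gradient u x‖ ^ 2 • x, ν x⟫ =
      ⟪gradient u x, ν x⟫ ^ 2 * ⟪ν x, x⟫ := hσ.mono fun x hx => by
    rw [real_inner_smul_left, norm_sq_eq_inner_sq_of_eq_inner_smul (hpar x hx), real_inner_comm x]
  simp only [divergence_inner_gradient_smul_gradient hu,
    divergence_normSq_gradient_smul_id hu] at flux₁ flux₂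
  rw [integral_add (hA.fun_add hB) hC, integral_add hA hB, integral_congr_ae bd₁] at flux₁
  rw [integral_add (hB.const_mul _) (hC.const_mul _), integral_const_mul, integral_const_mul,
    integral_congr_ae bd₂] at flux₂
  linarith

end Pohozaev

theorem stmt_12_general (n : ℕ) (Ω : Set (EuclideanSpace ℝ (Fin n)))
    (hΩb : Bornology.IsBounded Ω)
    (σ : Measure (EuclideanSpace ℝ (Fin n)))
    (ν : EuclideanSpace ℝ (Fin n) → EuclideanSpace ℝ (Fin n))
    (hσ : ∀ᵐ x ∂σ, x ∈ frontier Ω)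
    (u : EuclideanSpace ℝ (Fin n) → ℝ) (hu : ContDiff ℝ 2 u)
    (hpar : ∀ x ∈ frontier Ω, gradient u x = (inner ℝ (gradient u x) (ν x) : ℝ) • ν x)
    (hdiv : ∀ F : EuclideanSpace ℝ (Fin n) → EuclideanSpace ℝ (Fin n), ContDiff ℝ 1 F →
      (∫ x in Ω, LinearMap.trace ℝ (EuclideanSpace ℝ (Fin n))
          (fderiv ℝ F x : EuclideanSpace ℝ (Fin n) →ₗ[ℝ] EuclideanSpace ℝ (Fin n))) =
        ∫ x, (inner ℝ (F x) (ν x) : ℝ) ∂σ) :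
    -(∫ x in Ω, (LinearMap.trace ℝ (EuclideanSpace ℝ (Fin n))
          (fderiv ℝ (fun y => gradient u y) x :
            EuclideanSpace ℝ (Fin n) →ₗ[ℝ] EuclideanSpace ℝ (Fin n))) *
        (inner ℝ (gradient u x) x : ℝ)) =
      ((2 - (n : ℝ)) / 2) * (∫ x in Ω, ‖gradient u x‖ ^ 2) -
        (1 / 2) * ∫ x, ((inner ℝ (gradient u x) (ν x) : ℝ)) ^ 2 * (inner ℝ (ν x) x : ℝ) ∂σ := by
  have h := pohozaev_identity hΩb volume σ ν hσ hu hpar hdiv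
  rwa [finrank_euclideanSpace_fin] at h

/-- Classical Pohozaev boundary identity for the Laplacian:
`−∫_Ω Δu (∇u·x) = ((2−n)/2)∫_Ω |∇u|² − (1/2)∫_{∂Ω} (∂u/∂ν)² (ν·x) dσ`,
for `u ∈ C²` vanishing on `∂Ω` of a bounded domain `Ω`. The surface measure `σ` and
outward unit normal `ν` are encoded through the divergence theorem hypothesis `hdiv`,
and `Δu = tr(D(∇u))`. -/
theorem stmt_12 (n : ℕ) (hn : 1 ≤ n) (Ω : Set (EuclideanSpace ℝ (Fin n)))
    (hΩo : IsOpen Ω) (hΩb : Bornology.IsBounded Ω)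
    (σ : Measure (EuclideanSpace ℝ (Fin n))) [IsFiniteMeasure σ]
    (ν : EuclideanSpace ℝ (Fin n) → EuclideanSpace ℝ (Fin n))
    (hσ : ∀ᵐ x ∂σ, x ∈ frontier Ω)
    (hν1 : ∀ x ∈ frontier Ω, ‖ν x‖ = 1)
    (u : EuclideanSpace ℝ (Fin n) → ℝ) (hu : ContDiff ℝ 2 u)
    (hub : ∀ x ∈ frontier Ω, u x = 0)
    (hpar : ∀ x ∈ frontier Ω, gradient u x = (inner ℝ (gradient u x) (ν x) : ℝ) • ν x)
    (hdiv : ∀ F : EuclideanSpace ℝ (Fin n) → EuclideanSpace ℝ (Fin n), ContDiff ℝ 1 F →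
      (∫ x in Ω, LinearMap.trace ℝ (EuclideanSpace ℝ (Fin n))
          (fderiv ℝ F x : EuclideanSpace ℝ (Fin n) →ₗ[ℝ] EuclideanSpace ℝ (Fin n))) =
        ∫ x, (inner ℝ (F x) (ν x) : ℝ) ∂σ) :
    -(∫ x in Ω, (LinearMap.trace ℝ (EuclideanSpace ℝ (Fin n))
          (fderiv ℝ (fun y => gradient u y) x :
            EuclideanSpace ℝ (Fin n) →ₗ[ℝ] EuclideanSpace ℝ (Fin n))) *
        (inner ℝ (gradient u x) x : ℝ)) =
      ((2 - (n : ℝ)) / 2) * (∫ x in Ω, ‖gradient u x‖ ^ 2) -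
        (1 / 2) * ∫ x, ((inner ℝ (gradient u x) (ν x) : ℝ)) ^ 2 * (inner ℝ (ν x) x : ℝ) ∂σ :=
  stmt_12_general n Ω hΩb σ ν hσ u hu hpar hdiv
end

section
/- Let Ω ⊂ ℝ^n be bounded open, n ≥ 3, 0 < μ < n, s ∈ (0,1), and λ ≥ λ₁, where λ₁ is the first Dirichlet eigenvalue of the mixed operator −Δ + (−Δ)^s on Ω, attained by a positive eigenfunction w₀ ∈ Π(Ω). Then there is no weak solution u ∈ Π(Ω), u > 0 a.e. in Ω, to (−Δ + (−Δ)^s)u = (∫_Ω |u(y)|^{2_μ*}/|x−y|^μ dy)|u|^{2_μ*−2}u + λu in Ω with u ≡ 0 in ℝ^n∖Ω. -/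
/-!
Test the eigenvalue equation of `w₀` against `u` and the weak formulation for `u` against `w₀`.
The mixed bilinear form is symmetric, so both left-hand sides agree, giving
`λ₁ ∫ u w₀ = (Choquard term) + λ ∫ u w₀`. With `u, w₀ > 0` on `Ω` the Choquard term is positive
(the diagonal of `Ω × Ω` is null) and `∫ u w₀ ≥ 0`, which contradicts `λ ≥ λ₁`.
-/

open MeasureTheory

namespace MeasureTheory.Measure

theorem ae_prod_fst_ne_snd {α : Type*} [MeasurableSpace α] [MeasurableEq α] (μ ν : Measure α)
    [SFinite ν] [NullSingletonClass ν] : ∀ᵐ z ∂μ.prod ν, z.1 ≠ z.2 :=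
  (ae_prod_iff_ae_ae measurableSet_diagonal.compl).2 <| ae_of_all _ fun x => (ν.ae_ne x).mono
    fun _ hy => Ne.symm hy

end MeasureTheory.Measure

section Choquard

variable {E : Type*} [NormedAddCommGroup E] [MeasurableSpace E] [MeasurableEq E]
  {ν : Measure E} [SFinite ν] [NullSingletonClass ν] {Ω : Set E} {u w : E → ℝ}

theorem integral_choquard_pos (hΩ : ν Ω ≠ 0) (hu : ∀ᵐ x ∂ν, x ∈ Ω → 0 < u x)
    (hw : ∀ᵐ x ∂ν, x ∈ Ω → 0 < w x) (hw0 : ∀ x ∉ Ω, w x = 0) (p q r : ℝ)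
    (hint : Integrable (fun z : E × E =>
      |u z.2| ^ p * |u z.1| ^ q * u z.1 * w z.1 / ‖z.1 - z.2‖ ^ r) (ν.prod ν)) :
    0 < ∫ x, ∫ y, |u y| ^ p * |u x| ^ q * u x * w x / ‖x - y‖ ^ r ∂ν ∂ν := by
  rw [integral_integral (f := fun x y => |u y| ^ p * |u x| ^ q * u x * w x / ‖x - y‖ ^ r) hint]
  have huw : ∀ᵐ x ∂ν, x ∈ Ω → 0 < u x ∧ 0 < w x :=
    (hu.and hw).mono fun _ h hx => ⟨h.1 hx, h.2 hx⟩
  have hfst : ∀ᵐ z : E × E ∂ν.prod ν, z.1 ∈ Ω → 0 < u z.1 ∧ 0 < w z.1 :=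
    Measure.quasiMeasurePreserving_fst.ae huw
  have hsnd : ∀ᵐ z : E × E ∂ν.prod ν, z.2 ∈ Ω → 0 < u z.2 :=
    Measure.quasiMeasurePreserving_snd.ae hu
  refine (integral_pos_iff_support_of_nonneg_ae ?_ hint).2 ?_
  · filter_upwards [hfst] with z hz
    by_cases hx : z.1 ∈ Ω
    · obtain ⟨hux, hwx⟩ := hz hx
      positivity
    · simp [hw0 _ hx]
  · have hsupp : (Ω ×ˢ Ω : Set (E × E)) ≤ᵐ[ν.prod ν] Function.support fun z : E × E =>
        |u z.2| ^ p * |u z.1| ^ q * u z.1 * w z.1 / ‖z.1 - z.2‖ ^ r := by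
      filter_upwards [hfst, hsnd, Measure.ae_prod_fst_ne_snd ν ν] with z hz1 hz2 hne hz
      obtain ⟨hux, hwx⟩ := hz1 hz.1
      have huy := hz2 hz.2
      have hd : 0 < ‖z.1 - z.2‖ := norm_pos_iff.2 (sub_ne_zero.2 hne)
      exact ne_of_gt (by positivity)
    refine lt_of_lt_of_le ?_ (measure_mono_ae hsupp)
    rw [Measure.prod_prod]
    exact ENNReal.mul_pos hΩ hΩ

end Choquard

section MixedForm

variable {E : Type*} [NormedAddCommGroup E] [InnerProductSpace ℝ E] [CompleteSpace E]
  [MeasureSpace E]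

/-- On `ℝⁿ`, the form of `-Δ + (-Δ)^s` is `mixedForm C(n,s) (n + 2s)`. -/
noncomputable def mixedForm (C α : ℝ) (u φ : E → ℝ) : ℝ :=
  (∫ x, inner ℝ (gradient u x) (gradient φ x)) +
    C / 2 * ∫ x, ∫ y, (u x - u y) * (φ x - φ y) / ‖x - y‖ ^ α

theorem mixedForm_comm (C α : ℝ) (u φ : E → ℝ) : mixedForm C α u φ = mixedForm C α φ u := by
  simp only [mixedForm, real_inner_comm, mul_comm (u _ - u _)]

end MixedForm

theorem stmt_19_general (n : ℕ) (hn : 3 ≤ n) (s μ Cns lam lam1 : ℝ)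
    (Ω : Set (EuclideanSpace ℝ (Fin n))) (hΩo : IsOpen Ω) (hΩne : Ω.Nonempty)
    (w₀ : EuclideanSpace ℝ (Fin n) → ℝ) (hw₀d : Differentiable ℝ w₀)
    (hw₀0 : ∀ x, x ∉ Ω → w₀ x = 0)
    (hw₀pos : ∀ᵐ x, x ∈ Ω → 0 < w₀ x)
    (heig : ∀ φ : EuclideanSpace ℝ (Fin n) → ℝ, Differentiable ℝ φ →
      (∀ x, x ∉ Ω → φ x = 0) →
      (∫ x, (inner ℝ (gradient w₀ x) (gradient φ x) : ℝ)) +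
        Cns / 2 * (∫ x, ∫ y, (w₀ x - w₀ y) * (φ x - φ y) / ‖x - y‖ ^ ((n : ℝ) + 2 * s)) =
      lam1 * ∫ x, w₀ x * φ x)
    (hlam : lam1 ≤ lam) :
    ¬∃ u : EuclideanSpace ℝ (Fin n) → ℝ, Differentiable ℝ u ∧
      (∀ x, x ∉ Ω → u x = 0) ∧ (∀ᵐ x, x ∈ Ω → 0 < u x) ∧
      ∀ φ : EuclideanSpace ℝ (Fin n) → ℝ, Differentiable ℝ φ →
        (∀ x, x ∉ Ω → φ x = 0) →
        Integrable (fun z : EuclideanSpace ℝ (Fin n) × EuclideanSpace ℝ (Fin n) =>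
          |u z.2| ^ ((2 * (n : ℝ) - μ) / ((n : ℝ) - 2)) *
            |u z.1| ^ ((2 * (n : ℝ) - μ) / ((n : ℝ) - 2) - 2) * u z.1 * φ z.1 /
            ‖z.1 - z.2‖ ^ μ) (volume.prod volume) ∧
        (∫ x, (inner ℝ (gradient u x) (gradient φ x) : ℝ)) +
          Cns / 2 * (∫ x, ∫ y, (u x - u y) * (φ x - φ y) / ‖x - y‖ ^ ((n : ℝ) + 2 * s)) =
        (∫ x, ∫ y, |u y| ^ ((2 * (n : ℝ) - μ) / ((n : ℝ) - 2)) *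
            |u x| ^ ((2 * (n : ℝ) - μ) / ((n : ℝ) - 2) - 2) * u x * φ x / ‖x - y‖ ^ μ) +
          lam * ∫ x, u x * φ x := by
  have : NeZero n := ⟨by omega⟩
  rintro ⟨u, hud, hu0, hupos, hweak⟩
  obtain ⟨hint, hsol⟩ := hweak w₀ hw₀d hw₀0
  have hform_sol : mixedForm Cns (n + 2 * s) u w₀ = _ := hsol
  have hform_eig : mixedForm Cns (n + 2 * s) u w₀ = lam1 * ∫ x, u x * w₀ x := by
    have h := heig u hud hu0
    simp only [mul_comm (w₀ _)] at h
    rw [mixedForm_comm]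
    exact h
  have hchoq := integral_choquard_pos (hΩo.measure_pos volume hΩne).ne' hupos hw₀pos hw₀0 _ _ _ hint
  have hI : 0 ≤ ∫ x, u x * w₀ x := integral_nonneg_of_ae <| by
    filter_upwards [hupos, hw₀pos] with x hux hwx
    by_cases hx : x ∈ Ω
    · exact (mul_pos (hux hx) (hwx hx)).le
    · simp [hu0 x hx]
  linarith [hform_sol.symm.trans hform_eig, mul_le_mul_of_nonneg_right hlam hI]

/-- Nonexistence for `λ ≥ λ₁`: if `λ₁` is the first Dirichlet eigenvalue of the mixed
operator `−Δ + (−Δ)^s` on a bounded open `Ω`, attained by a positive eigenfunction `w₀`,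
and `λ ≥ λ₁`, then the critical Choquard problem
`(−Δ + (−Δ)^s)u = (∫_Ω |u(y)|^{2μ*}/|x−y|^μ dy)|u|^{2μ*−2}u + λu` has no positive weak
solution vanishing outside `Ω`. Here `2μ* = (2n−μ)/(n−2)` and `Cns = C(n,s)`. -/
theorem stmt_19 (n : ℕ) (hn : 3 ≤ n) (s μ Cns lam lam1 : ℝ) (hs0 : 0 < s) (hs1 : s < 1)
    (hμ0 : 0 < μ) (hμn : μ < n) (hCns : 0 < Cns)
    (Ω : Set (EuclideanSpace ℝ (Fin n))) (hΩo : IsOpen Ω)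
    (hΩb : Bornology.IsBounded Ω) (hΩne : Ω.Nonempty)
    (w₀ : EuclideanSpace ℝ (Fin n) → ℝ) (hw₀d : Differentiable ℝ w₀)
    (hw₀0 : ∀ x, x ∉ Ω → w₀ x = 0)
    (hw₀pos : ∀ᵐ x, x ∈ Ω → 0 < w₀ x)
    (heig : ∀ φ : EuclideanSpace ℝ (Fin n) → ℝ, Differentiable ℝ φ →
      (∀ x, x ∉ Ω → φ x = 0) →
      (∫ x, (inner ℝ (gradient w₀ x) (gradient φ x) : ℝ)) +
        Cns / 2 * (∫ x, ∫ y, (w₀ x - w₀ y) * (φ x - φ y) / ‖x - y‖ ^ ((n : ℝ) + 2 * s)) =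
      lam1 * ∫ x, w₀ x * φ x)
    (hlam : lam1 ≤ lam) :
    ¬∃ u : EuclideanSpace ℝ (Fin n) → ℝ, Differentiable ℝ u ∧
      (∀ x, x ∉ Ω → u x = 0) ∧ (∀ᵐ x, x ∈ Ω → 0 < u x) ∧
      ∀ φ : EuclideanSpace ℝ (Fin n) → ℝ, Differentiable ℝ φ →
        (∀ x, x ∉ Ω → φ x = 0) →
        Integrable (fun z : EuclideanSpace ℝ (Fin n) × EuclideanSpace ℝ (Fin n) =>
          |u z.2| ^ ((2 * (n : ℝ) - μ) / ((n : ℝ) - 2)) *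
            |u z.1| ^ ((2 * (n : ℝ) - μ) / ((n : ℝ) - 2) - 2) * u z.1 * φ z.1 /
            ‖z.1 - z.2‖ ^ μ) (volume.prod volume) ∧
        (∫ x, (inner ℝ (gradient u x) (gradient φ x) : ℝ)) +
          Cns / 2 * (∫ x, ∫ y, (u x - u y) * (φ x - φ y) / ‖x - y‖ ^ ((n : ℝ) + 2 * s)) =
        (∫ x, ∫ y, |u y| ^ ((2 * (n : ℝ) - μ) / ((n : ℝ) - 2)) *
            |u x| ^ ((2 * (n : ℝ) - μ) / ((n : ℝ) - 2) - 2) * u x * φ x / ‖x - y‖ ^ μ) +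
          lam * ∫ x, u x * φ x :=
  stmt_19_general n hn s μ Cns lam lam1 Ω hΩo hΩne w₀ hw₀d hw₀0 hw₀pos heig hlam
end
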